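/- arXiv:2402.04604 — 2 statements merged into one kernel-verified Lean document; each statement's English description precedes it below -/
import Mathlib

section
/- For σ ∈ G, the K-subspace A^σ = {φ_{b,σ} : b ∈ L} of the space of symmetric K-bilinear forms on L has K-dimension n if the order of σ is not 2, and K-dimension n/2 if the order of σ is 2. Equivalently, the K-linear map L → A^σ, b ↦ φ_{b,σ}, has kernel {0} when ord(σ) ≠ 2 and kernel {b ∈ L : σ(b) = −b} (of dimension n/2) when ord(σ) = 2. -/
/-!
By nondegeneracy of the trace form, `φ_{b,σ} = 0` iff `b σ(y) + σ⁻¹(b) σ⁻¹(y) = 0` for all `y`.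
Taking `y = 1` gives `σ⁻¹(b) = -b`, after which `b ≠ 0` forces `σ = σ⁻¹`, and `σ ≠ 1` since
`char K ≠ 2`. So `b ↦ φ_{b,σ}` is injective unless `ord σ = 2`, in which case its kernel is the
`(-1)`-eigenspace of `σ`. For an involution, `L` is the sum of the `±1`-eigenspaces, and
multiplication by any `c ≠ 0` with `σ c = -c` maps one onto the other, so each has dimension `n/2`.
-/

open Module

/-- The symmetric `K`-bilinear form `φ_{b,σ}(x,y) = Tr_{L/K}(b·(x·σ(y) + σ(x)·y))`,
as a bilinear form `L →ₗ[K] L →ₗ[K] K`.  (Note that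
`Tr(b·(x·σ(y) + σ(x)·y)) = Tr((b·x)·σ(y)) + Tr((b·σ(x))·y)`.) -/
noncomputable def phi (K L : Type*) [Field K] [Field L] [Algebra K L]
    (b : L) (σ : L ≃ₐ[K] L) : L →ₗ[K] L →ₗ[K] K :=
  (Algebra.traceForm K L).compl₁₂ (LinearMap.mulLeft K b) σ.toLinearMap +
    (Algebra.traceForm K L).compl₁₂ ((LinearMap.mulLeft K b).comp σ.toLinearMap) LinearMap.id

/-- The `K`-subspace `A^σ = {φ_{b,σ} : b ∈ L}` of the space of bilinear forms on `L`. -/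
noncomputable def Asub (K L : Type*) [Field K] [Field L] [Algebra K L]
    (σ : L ≃ₐ[K] L) : Submodule K (L →ₗ[K] L →ₗ[K] K) :=
  Submodule.span K (Set.range fun b : L => phi K L b σ)

section LinearAlgebra

variable {K V : Type*} [Field K] [AddCommGroup V] [Module K V]

theorem range_add_id_eq_ker_sub_id (h2 : (2 : K) ≠ 0) {f : V →ₗ[K] V}
    (hf : f ∘ₗ f = LinearMap.id) :
    LinearMap.range (f + LinearMap.id) = LinearMap.ker (f - LinearMap.id) := by
  have hff (x : V) : f (f x) = x := LinearMap.congr_fun hf x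
  apply le_antisymm
  · rintro _ ⟨x, rfl⟩
    simp [hff, add_comm]
  · intro x hx
    rw [LinearMap.mem_ker, LinearMap.sub_apply, LinearMap.id_apply, sub_eq_zero] at hx
    refine ⟨(2 : K)⁻¹ • x, ?_⟩
    rw [LinearMap.add_apply, LinearMap.id_apply, map_smul, hx, ← two_smul K, smul_smul,
      mul_inv_cancel₀ h2, one_smul]

theorem finrank_ker_sub_id_add_finrank_ker_add_id [FiniteDimensional K V] (h2 : (2 : K) ≠ 0)
    {f : V →ₗ[K] V} (hf : f ∘ₗ f = LinearMap.id) :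
    finrank K (LinearMap.ker (f - LinearMap.id)) + finrank K (LinearMap.ker (f + LinearMap.id)) =
      finrank K V := by
  rw [← range_add_id_eq_ker_sub_id h2 hf, LinearMap.finrank_range_add_finrank_ker]

end LinearAlgebra

theorem mul_self_eq_one_of_orderOf_eq_two {G : Type*} [Monoid G] {g : G} (hg : orderOf g = 2) :
    g * g = 1 := by
  rw [← sq, ← hg, pow_orderOf_eq_one]

section Involution

variable {K L : Type*} [Field K] [Field L] [Algebra K L]

theorem exists_ne_zero_apply_eq_neg {σ : L ≃ₐ[K] L} (hσ : σ * σ = 1) (hσ1 : σ ≠ 1) :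
    ∃ c : L, c ≠ 0 ∧ σ c = -c := by
  obtain ⟨a, ha⟩ : ∃ a, σ a ≠ a := by
    by_contra! h
    exact hσ1 (AlgEquiv.ext h)
  refine ⟨a - σ a, sub_ne_zero.mpr (Ne.symm ha), ?_⟩
  rw [map_sub, ← AlgEquiv.mul_apply, hσ, AlgEquiv.one_apply, neg_sub]

theorem map_mulLeft_ker_sub_id {σ : L ≃ₐ[K] L} {c : L} (hc0 : c ≠ 0) (hc : σ c = -c) :
    (LinearMap.ker (σ.toLinearMap - LinearMap.id)).map (LinearMap.mulLeft K c) =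
      LinearMap.ker (σ.toLinearMap + LinearMap.id) := by
  ext y
  simp only [Submodule.mem_map, LinearMap.mem_ker, LinearMap.sub_apply, LinearMap.add_apply,
    LinearMap.id_apply, AlgEquiv.toLinearMap_apply, LinearMap.mulLeft_apply, sub_eq_zero,
    add_eq_zero_iff_eq_neg]
  constructor
  · rintro ⟨x, hx, rfl⟩
    rw [map_mul, hc, hx, neg_mul]
  · intro hy
    refine ⟨c⁻¹ * y, ?_, mul_inv_cancel_left₀ hc0 y⟩
    rw [map_mul, map_inv₀, hc, hy, inv_neg, neg_mul_neg]

theorem finrank_ker_sub_id_eq_finrank_ker_add_id {σ : L ≃ₐ[K] L} {c : L} (hc0 : c ≠ 0)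
    (hc : σ c = -c) :
    finrank K (LinearMap.ker (σ.toLinearMap - LinearMap.id)) =
      finrank K (LinearMap.ker (σ.toLinearMap + LinearMap.id)) := by
  rw [← map_mulLeft_ker_sub_id hc0 hc]
  exact (Submodule.equivMapOfInjective _ (mul_right_injective₀ hc0) _).finrank_eq

theorem two_mul_finrank_ker_add_id [FiniteDimensional K L] (h2 : (2 : K) ≠ 0) {σ : L ≃ₐ[K] L}
    (hσ : orderOf σ = 2) :
    2 * finrank K (LinearMap.ker (σ.toLinearMap + LinearMap.id)) = finrank K L := by
  have hσσ := mul_self_eq_one_of_orderOf_eq_two hσ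
  obtain ⟨c, hc0, hc⟩ := exists_ne_zero_apply_eq_neg hσσ (by rintro rfl; simp at hσ)
  rw [← finrank_ker_sub_id_add_finrank_ker_add_id h2 (f := σ.toLinearMap)
    (by ext x; exact AlgEquiv.ext_iff.mp hσσ x), finrank_ker_sub_id_eq_finrank_ker_add_id hc0 hc,
    two_mul]

end Involution

section Phi

variable {K L : Type*} [Field K] [Field L] [Algebra K L]

theorem phi_apply (b : L) (σ : L ≃ₐ[K] L) (x y : L) :
    phi K L b σ x y = Algebra.trace K L (x * (b * σ y + σ.symm b * σ.symm y)) := by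
  have h : Algebra.trace K L (b * σ x * y) = Algebra.trace K L (x * (σ.symm b * σ.symm y)) := by
    rw [← Algebra.trace_eq_of_algEquiv σ (x * _)]
    simp only [map_mul, AlgEquiv.apply_symm_apply]
    ring_nf
  simp only [phi, LinearMap.add_apply, LinearMap.compl₁₂_apply, LinearMap.mulLeft_apply,
    LinearMap.comp_apply, LinearMap.id_apply, AlgEquiv.toLinearMap_apply,
    Algebra.traceForm_apply, h, mul_add, map_add]
  ring_nf

noncomputable def phiLinearMap (σ : L ≃ₐ[K] L) : L →ₗ[K] L →ₗ[K] L →ₗ[K] K where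
  toFun b := phi K L b σ
  map_add' b b' := by
    ext x y
    simp only [phi_apply, LinearMap.add_apply]
    rw [← map_add, map_add σ.symm]
    ring_nf
  map_smul' c b := by
    ext x y
    simp only [phi_apply, LinearMap.smul_apply, RingHom.id_apply]
    rw [← map_smul, map_smul σ.symm, smul_mul_assoc, smul_mul_assoc, ← smul_add, mul_smul_comm]

theorem Asub_eq_range (σ : L ≃ₐ[K] L) : Asub K L σ = LinearMap.range (phiLinearMap σ) := by
  rw [Asub, ← Submodule.span_eq (LinearMap.range _), LinearMap.coe_range]
  rfl

theorem phi_eq_zero_iff [FiniteDimensional K L] [Algebra.IsSeparable K L] {b : L}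
    {σ : L ≃ₐ[K] L} : phi K L b σ = 0 ↔ ∀ y, b * σ y + σ.symm b * σ.symm y = 0 := by
  refine ⟨fun h y ↦ (traceForm_nondegenerate K L).1 _ fun x ↦ ?_, fun h ↦ ?_⟩
  · rw [Algebra.traceForm_apply, mul_comm]
    simpa only [phi_apply, LinearMap.zero_apply] using LinearMap.congr_fun₂ h x y
  · ext x y
    simp [phi_apply, h y]

theorem symm_eq_of_mul_self_eq_one {σ : L ≃ₐ[K] L} (hσ : σ * σ = 1) (x : L) : σ.symm x = σ x := by
  rw [AlgEquiv.symm_apply_eq, ← AlgEquiv.mul_apply, hσ, AlgEquiv.one_apply]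

theorem phi_eq_zero_iff_apply_eq_neg [FiniteDimensional K L] [Algebra.IsSeparable K L] {b : L}
    {σ : L ≃ₐ[K] L} (hσ : σ * σ = 1) : phi K L b σ = 0 ↔ σ b = -b := by
  simp only [phi_eq_zero_iff, symm_eq_of_mul_self_eq_one hσ]
  refine ⟨fun h ↦ ?_, fun h y ↦ by rw [h]; ring⟩
  simpa [add_eq_zero_iff_eq_neg'] using h 1

theorem mul_self_eq_one_of_phi_eq_zero [FiniteDimensional K L] [Algebra.IsSeparable K L] {b : L}
    {σ : L ≃ₐ[K] L} (hb : phi K L b σ = 0) (hb0 : b ≠ 0) : σ * σ = 1 := by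
  rw [phi_eq_zero_iff] at hb
  have hb1 : σ.symm b = -b := by simpa [add_eq_zero_iff_eq_neg'] using hb 1
  have hsymm (y : L) : σ y = σ.symm y :=
    mul_left_cancel₀ hb0 (by linear_combination hb y - σ.symm y * hb1)
  ext y
  rw [AlgEquiv.mul_apply, hsymm (σ y), AlgEquiv.symm_apply_apply, AlgEquiv.one_apply]

theorem orderOf_eq_two_of_phi_eq_zero [FiniteDimensional K L] [Algebra.IsSeparable K L]
    (h2 : (2 : K) ≠ 0) {b : L} {σ : L ≃ₐ[K] L} (hb : phi K L b σ = 0) (hb0 : b ≠ 0) :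
    orderOf σ = 2 := by
  have hσσ := mul_self_eq_one_of_phi_eq_zero hb hb0
  refine orderOf_eq_prime ((sq σ).trans hσσ) ?_
  rintro rfl
  have hneg : b = -b := by simpa using (phi_eq_zero_iff_apply_eq_neg hσσ).mp hb
  have h2b : (2 : K) • b = 0 := by rw [two_smul]; nth_rewrite 2 [hneg]; exact add_neg_cancel b
  exact hb0 ((smul_eq_zero.mp h2b).resolve_left h2)

end Phi

/-- For `σ ∈ Gal(L/K)`, the subspace `A^σ` has `K`-dimension `n` if
`ord(σ) ≠ 2` and `K`-dimension `n/2` if `ord(σ) = 2`.  Equivalently, the `K`-linear map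
`L → A^σ`, `b ↦ φ_{b,σ}`, has kernel `{0}` when `ord(σ) ≠ 2` and kernel
`{b ∈ L : σ(b) = −b}` (of dimension `n/2`) when `ord(σ) = 2`. -/
theorem dim_Asub (K L : Type*) [Field K] [Field L] [Algebra K L]
    [FiniteDimensional K L] [IsGalois K L] (h2 : (2 : K) ≠ 0) (σ : L ≃ₐ[K] L) :
    (orderOf σ ≠ 2 →
      finrank K (Asub K L σ) = finrank K L ∧
      ∀ b : L, phi K L b σ = 0 → b = 0) ∧
    (orderOf σ = 2 →
      finrank K (Asub K L σ) = finrank K L / 2 ∧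
      (∀ b : L, phi K L b σ = 0 ↔ σ b = -b) ∧
      finrank K (LinearMap.ker (σ.toLinearMap + LinearMap.id)) = finrank K L / 2) := by
  constructor
  · intro hσ
    have hker (b : L) (hb : phi K L b σ = 0) : b = 0 :=
      by_contra fun hb0 ↦ hσ (orderOf_eq_two_of_phi_eq_zero h2 hb hb0)
    refine ⟨?_, hker⟩
    rw [Asub_eq_range]
    exact LinearMap.finrank_range_of_inj ((injective_iff_map_eq_zero _).mpr hker)
  · intro hσ
    have hiff (b : L) : phi K L b σ = 0 ↔ σ b = -b :=
      phi_eq_zero_iff_apply_eq_neg (mul_self_eq_one_of_orderOf_eq_two hσ)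
    have hker : LinearMap.ker (phiLinearMap σ) = LinearMap.ker (σ.toLinearMap + LinearMap.id) := by
      ext b
      simp [phiLinearMap, hiff, add_eq_zero_iff_eq_neg]
    have hrank := LinearMap.finrank_range_add_finrank_ker (V₂ := L →ₗ[K] L →ₗ[K] K)
      (phiLinearMap σ)
    rw [hker, ← Asub_eq_range] at hrank
    have hdim := two_mul_finrank_ker_add_id h2 hσ
    exact ⟨by omega, hiff, by omega⟩
end

section
/- Suppose n = [L:K] is even and G = {τ_1, …, τ_k, 1, σ_1, σ_1⁻¹, …, σ_m, σ_m⁻¹} is a listing of G without repetitions, where τ_1, …, τ_k are exactly the involutions of G and σ_0 = 1. Then Sym_K(L) is the internal direct sum A^{τ_1} ⊕ ⋯ ⊕ A^{τ_k} ⊕ A^{σ_0} ⊕ A^{σ_1} ⊕ ⋯ ⊕ A^{σ_m}, where each A^{τ_i} has K-dimension n/2 and every nonzero form in A^{τ_i} is nondegenerate, and each A^{σ_j} has K-dimension n. -/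
open Module

/-- `Sym_K(L)`: the `K`-subspace of symmetric bilinear forms on `L`. -/
def symSubmodule (K L : Type*) [Field K] [Field L] [Algebra K L] :
    Submodule K (L →ₗ[K] L →ₗ[K] K) where
  carrier := {B | ∀ x y : L, B x y = B y x}
  add_mem' := by
    intro B C hB hC x y
    simp [hB x y, hC x y]
  zero_mem' := by intro x y; simp
  smul_mem' := by
    intro c B hB x y
    simp [hB x y]

/-!
For `c : G → L` put `Θ c (x, y) = Tr(x · ∑_σ c_σ σ(y))` (`twistedTraceSum`). By Dedekind's
independence of characters and the nondegeneracy of the trace form, `Θ` is injective, hence an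
isomorphism `L^G ≅ Bil_K(L)` as both sides have dimension `n²`. In these coordinates `φ_{b,σ}` has
entry `b` at `σ`, entry `σ⁻¹ b` at `σ⁻¹` and zeros elsewhere. So subspaces `A^σ` from different
inverse pairs `{σ, σ⁻¹}` are independent, `A^σ ≅ L` when `σ ≠ σ⁻¹` or `σ = 1`, and for an
involution `τ` the space `A^τ` is a copy of `{b + τ b} = L^τ`, of dimension `n/2`. A symmetric
form `B = Θ c` is `½ (B + Bᵗ) = ½ ∑_σ φ_{c_σ,σ}`, which gives the sum.
-/

open Function in
lemma iSupIndep_of_apply_eq_zero_of_notMem {ι κ R M : Type*} [Semiring R] [AddCommMonoid M]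
    [Module R M] {S : κ → Submodule R (ι → M)} (T : κ → Set ι) (hT : Pairwise (Disjoint on T))
    (hS : ∀ p, ∀ f ∈ S p, ∀ i ∉ T p, f i = 0) : iSupIndep S := by
  refine iSupIndep_def.2 fun p => Submodule.disjoint_def.2 fun f hfp hf => funext fun i => ?_
  by_cases hi : i ∈ T p
  · have hle : (⨆ q, ⨆ (_ : q ≠ p), S q) ≤ LinearMap.ker (LinearMap.proj i) :=
      iSup₂_le fun q hq g hg => hS q g hg i (Set.disjoint_right.1 (hT hq) hi)
    exact hle hf
  · exact hS p f hfp i hi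

section GaloisForms

variable {K L : Type*} [Field K] [Field L] [Algebra K L]

noncomputable def twistedTraceForm (σ : L ≃ₐ[K] L) : L →ₗ[K] L →ₗ[K] L →ₗ[K] K :=
  LinearMap.llcomp K L L (L →ₗ[K] K) ((Algebra.traceForm K L).compl₂ σ.toLinearMap) ∘ₗ
    LinearMap.mul K L

@[simp] lemma twistedTraceForm_apply (σ : L ≃ₐ[K] L) (c x y : L) :
    twistedTraceForm σ c x y = Algebra.trace K L (c * x * σ y) := rfl

lemma flip_twistedTraceForm (σ : L ≃ₐ[K] L) (c : L) :
    (twistedTraceForm σ c).flip = twistedTraceForm σ⁻¹ (σ⁻¹ c) := by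
  ext x y
  rw [LinearMap.flip_apply, twistedTraceForm_apply, twistedTraceForm_apply,
    ← Algebra.trace_eq_of_algEquiv σ (σ⁻¹ c * x * σ⁻¹ y)]
  simp only [map_mul, AlgEquiv.aut_inv, AlgEquiv.apply_symm_apply]
  ring_nf

lemma phi_eq_add_flip (b : L) (σ : L ≃ₐ[K] L) :
    phi K L b σ = twistedTraceForm σ b + (twistedTraceForm σ b).flip := by
  ext x y
  simp only [phi, LinearMap.add_apply, LinearMap.compl₁₂_apply, Algebra.traceForm_apply,
    LinearMap.mulLeft_apply, LinearMap.comp_apply, LinearMap.flip_apply, LinearMap.id_apply,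
    AlgEquiv.toLinearMap_apply, twistedTraceForm_apply]
  ring_nf

lemma twistedTraceForm_nondegenerate [FiniteDimensional K L] [Algebra.IsSeparable K L]
    (σ : L ≃ₐ[K] L) {c x : L} (hc : c ≠ 0) (hx : ∀ y, twistedTraceForm σ c x y = 0) : x = 0 := by
  have hcx : c * x = 0 := (traceForm_nondegenerate K L).1 _ fun z => by
    simpa using hx (σ⁻¹ z)
  exact (mul_eq_zero.mp hcx).resolve_left hc


lemma phi_symm (b : L) (σ : L ≃ₐ[K] L) (x y : L) : phi K L b σ x y = phi K L b σ y x := by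
  rw [phi_eq_add_flip, LinearMap.add_apply, LinearMap.add_apply, add_comm]
  rfl

lemma Asub_le_symSubmodule (σ : L ≃ₐ[K] L) : Asub K L σ ≤ symSubmodule K L :=
  Submodule.span_le.2 <| Set.range_subset_iff.2 fun b => phi_symm b σ

lemma phi_inv (b : L) (σ : L ≃ₐ[K] L) : phi K L b σ⁻¹ = phi K L (σ b) σ := by
  have h : twistedTraceForm σ⁻¹ b = (twistedTraceForm σ (σ b)).flip := by
    rw [flip_twistedTraceForm, AlgEquiv.aut_inv, AlgEquiv.symm_apply_apply]
  rw [phi_eq_add_flip, phi_eq_add_flip, h, LinearMap.flip_flip, add_comm]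

lemma Asub_inv (σ : L ≃ₐ[K] L) : Asub K L σ⁻¹ = Asub K L σ := by
  rw [Asub, Asub, funext (phi_inv · σ)]
  exact congrArg _ (σ.surjective.range_comp fun b => phi K L b σ)

lemma phi_of_inv_eq_self {τ : L ≃ₐ[K] L} (hτ : τ⁻¹ = τ) (b : L) :
    phi K L b τ = twistedTraceForm τ (b + τ b) := by
  rw [phi_eq_add_flip, flip_twistedTraceForm, hτ, map_add]

open IntermediateField in
lemma range_id_add_eq_fixedField (h2 : (2 : K) ≠ 0) {τ : L ≃ₐ[K] L} (hτ : τ⁻¹ = τ) :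
    LinearMap.range (LinearMap.id + τ.toLinearMap) =
      Subalgebra.toSubmodule (fixedField (Subgroup.zpowers τ)).toSubalgebra := by
  have hττ (x : L) : τ (τ x) = x := by
    nth_rw 2 [← hτ]
    exact τ.apply_symm_apply x
  have h2L : (2 : L) ≠ 0 := by rw [← map_ofNat (algebraMap K L) 2]; exact (map_ne_zero _).2 h2
  ext x
  have hfix : x ∈ fixedField (Subgroup.zpowers τ) ↔ τ x = x := by
    simp only [mem_fixedField_iff, Subgroup.forall_mem_zpowers]
    simpa [MulAction.mem_fixedBy, AlgEquiv.smul_def] using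
      MulAction.mem_fixedBy_zpowers_iff_mem_fixedBy (g := τ) (a := x)
  simp only [LinearMap.mem_range, LinearMap.add_apply, LinearMap.id_apply,
    AlgEquiv.toLinearMap_apply, Subalgebra.mem_toSubmodule, mem_toSubalgebra, hfix]
  constructor
  · rintro ⟨b, rfl⟩
    rw [map_add, hττ, add_comm]
  · intro hx
    refine ⟨x / 2, ?_⟩
    rw [map_div₀, hx, map_ofNat, ← add_div, ← two_mul, mul_div_cancel_left₀ x h2L]

section Coords

variable [DecidableEq (L ≃ₐ[K] L)]

/-- The coordinates of `φ_{b,σ}` under the isomorphism `twistedTraceSum`. -/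
noncomputable def phiCoords (σ : L ≃ₐ[K] L) : L →ₗ[K] (L ≃ₐ[K] L) → L :=
  LinearMap.single K (fun _ => L) σ + LinearMap.single K (fun _ => L) σ⁻¹ ∘ₗ σ⁻¹.toLinearMap

lemma phiCoords_apply (σ : L ≃ₐ[K] L) (b : L) :
    phiCoords σ b = Pi.single σ b + Pi.single σ⁻¹ (σ⁻¹ b) := rfl

lemma phiCoords_apply_of_ne {σ ρ : L ≃ₐ[K] L} (b : L) (h : ρ ≠ σ) (h' : ρ ≠ σ⁻¹) :
    phiCoords σ b ρ = 0 := by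
  simp [phiCoords_apply, Pi.single_eq_of_ne h, Pi.single_eq_of_ne h']

end Coords

variable [FiniteDimensional K L]

variable (K L) in
noncomputable def twistedTraceSum : ((L ≃ₐ[K] L) → L) →ₗ[K] L →ₗ[K] L →ₗ[K] K :=
  ∑ σ, twistedTraceForm σ ∘ₗ LinearMap.proj σ

lemma twistedTraceSum_single [DecidableEq (L ≃ₐ[K] L)] (σ : L ≃ₐ[K] L) (c : L) :
    twistedTraceSum K L (Pi.single σ c) = twistedTraceForm σ c := by
  rw [twistedTraceSum, LinearMap.sum_apply, Finset.sum_eq_single σ]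
  · simp
  · intro ρ _ hρ
    simp [Pi.single_eq_of_ne hρ]
  · simp

lemma twistedTraceSum_apply (c : (L ≃ₐ[K] L) → L) (x y : L) :
    twistedTraceSum K L c x y = Algebra.trace K L (x * ∑ σ, c σ * σ y) := by
  simp only [twistedTraceSum, LinearMap.sum_apply, LinearMap.comp_apply, LinearMap.proj_apply,
    twistedTraceForm_apply, Finset.mul_sum, map_sum]
  exact Finset.sum_congr rfl fun σ _ => by ring_nf

lemma twistedTraceSum_injective [Algebra.IsSeparable K L] :
    Function.Injective (twistedTraceSum K L) := by
  refine (injective_iff_map_eq_zero _).2 fun c hc => ?_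
  have hsum : ∀ y, ∑ σ, c σ * σ y = 0 := fun y =>
    (traceForm_nondegenerate K L).1 _ fun x => by
      rw [Algebra.traceForm_apply, mul_comm, ← twistedTraceSum_apply, hc]
      rfl
  have hind : LinearIndependent L fun σ : L ≃ₐ[K] L => (σ : L → L) :=
    (linearIndependent_monoidHom L L).comp (fun σ : L ≃ₐ[K] L => (σ : L →* L))
      fun σ τ h => AlgEquiv.ext (DFunLike.congr_fun h :)
  exact funext (Fintype.linearIndependent_iff.1 hind c (funext fun y => by simpa using hsum y))

lemma twistedTraceSum_bijective [IsGalois K L] :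
    Function.Bijective (twistedTraceSum K L) := by
  refine ⟨twistedTraceSum_injective, ?_⟩
  refine (LinearMap.injective_iff_surjective_of_finrank_eq_finrank
    (V := (L ≃ₐ[K] L) → L) (V₂ := L →ₗ[K] L →ₗ[K] K) ?_).1 twistedTraceSum_injective
  rw [Module.finrank_pi_fintype, Module.finrank_linearMap, Module.finrank_linearMap, finrank_self,
    mul_one, Finset.sum_const, Finset.card_univ, ← Nat.card_eq_fintype_card,
    IsGalois.card_aut_eq_finrank, smul_eq_mul]

lemma phi_eq_twistedTraceSum [DecidableEq (L ≃ₐ[K] L)] (b : L) (σ : L ≃ₐ[K] L) :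
    phi K L b σ = twistedTraceSum K L (phiCoords σ b) := by
  rw [phiCoords_apply, map_add, twistedTraceSum_single, twistedTraceSum_single, phi_eq_add_flip,
    flip_twistedTraceForm]

lemma Asub_eq_map [DecidableEq (L ≃ₐ[K] L)] (σ : L ≃ₐ[K] L) :
    Asub K L σ = (LinearMap.range (phiCoords σ)).map (twistedTraceSum K L) := by
  have h : (fun b => phi K L b σ) = twistedTraceSum K L ∘ₗ phiCoords σ :=
    funext (phi_eq_twistedTraceSum · σ)
  rw [Asub, ← LinearMap.range_comp, h, ← LinearMap.coe_range, Submodule.span_eq]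

lemma finrank_Asub [DecidableEq (L ≃ₐ[K] L)] [Algebra.IsSeparable K L] (σ : L ≃ₐ[K] L) :
    finrank K (Asub K L σ) = finrank K (LinearMap.range (phiCoords σ)) := by
  rw [Asub_eq_map]
  exact (Submodule.equivMapOfInjective _ twistedTraceSum_injective _).finrank_eq.symm

lemma mem_Asub_iff {σ : L ≃ₐ[K] L} {B : L →ₗ[K] L →ₗ[K] K} :
    B ∈ Asub K L σ ↔ ∃ b, phi K L b σ = B := by
  classical
  simp [Asub_eq_map, phi_eq_twistedTraceSum]

lemma finrank_Asub_of_ne_inv [Algebra.IsSeparable K L] {σ : L ≃ₐ[K] L} (hσ : σ ≠ σ⁻¹) :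
    finrank K (Asub K L σ) = finrank K L := by
  classical
  refine (finrank_Asub σ).trans (LinearMap.finrank_range_of_inj fun b b' h => ?_)
  simpa [phiCoords_apply, Pi.single_eq_of_ne hσ] using congrFun h σ

lemma finrank_Asub_one [Algebra.IsSeparable K L] (h2 : (2 : K) ≠ 0) :
    finrank K (Asub K L 1) = finrank K L := by
  classical
  refine (finrank_Asub 1).trans (LinearMap.finrank_range_of_inj fun b b' h => ?_)
  have h2L : (2 : L) ≠ 0 := by rw [← map_ofNat (algebraMap K L) 2]; exact (map_ne_zero _).2 h2
  simpa [phiCoords_apply, ← two_mul, h2L] using congrFun h 1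

lemma eq_zero_of_mem_Asub_of_inv_eq_self [Algebra.IsSeparable K L] {τ : L ≃ₐ[K] L}
    (hτ : τ⁻¹ = τ) {B : L →ₗ[K] L →ₗ[K] K} (hB : B ∈ Asub K L τ) (hB0 : B ≠ 0) {x : L}
    (hx : ∀ y, B x y = 0) : x = 0 := by
  obtain ⟨b, rfl⟩ := mem_Asub_iff.1 hB
  rw [phi_of_inv_eq_self hτ] at hB0 hx
  exact twistedTraceForm_nondegenerate τ (fun h => hB0 (by rw [h, map_zero])) hx

open IntermediateField in
lemma two_mul_finrank_Asub_of_orderOf_eq_two [IsGalois K L] (h2 : (2 : K) ≠ 0)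
    {τ : L ≃ₐ[K] L} (hτ : orderOf τ = 2) : 2 * finrank K (Asub K L τ) = finrank K L := by
  classical
  have hτinv := inv_eq_self_of_orderOf_eq_two hτ
  have hcoords :
      phiCoords τ = LinearMap.single K (fun _ => L) τ ∘ₗ (LinearMap.id + τ.toLinearMap) := by
    ext b : 1
    simp [phiCoords_apply, hτinv, Pi.single_add]
  have hsingle : Function.Injective (LinearMap.single K (fun _ : L ≃ₐ[K] L => L) τ) :=
    fun b b' h => by simpa using congrFun h τ
  rw [finrank_Asub, hcoords, LinearMap.range_comp,
    ← (Submodule.equivMapOfInjective _ hsingle _).finrank_eq, range_id_add_eq_fixedField h2 hτinv,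
    Subalgebra.finrank_toSubmodule, finrank_eq_finrank_subalgebra,
    ← Module.finrank_mul_finrank K (fixedField (Subgroup.zpowers τ)) L,
    finrank_fixedField_eq_card, Nat.card_zpowers, hτ, mul_comm]

lemma twistedTraceSum_add_flip (c : (L ≃ₐ[K] L) → L) :
    twistedTraceSum K L c + (twistedTraceSum K L c).flip = ∑ σ, phi K L (c σ) σ := by
  have h : twistedTraceSum K L c = ∑ σ, twistedTraceForm σ (c σ) := by
    simp [twistedTraceSum, LinearMap.sum_apply]
  rw [h, ← LinearMap.lflip_apply (R₀ := K), map_sum, ← Finset.sum_add_distrib]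
  exact Finset.sum_congr rfl fun σ _ => (phi_eq_add_flip (c σ) σ).symm

lemma symSubmodule_le_iSup_Asub [IsGalois K L] (h2 : (2 : K) ≠ 0) :
    symSubmodule K L ≤ ⨆ σ, Asub K L σ := by
  intro B hB
  obtain ⟨c, rfl⟩ := twistedTraceSum_bijective.2 B
  have hflip : (twistedTraceSum K L c).flip = twistedTraceSum K L c :=
    LinearMap.ext₂ fun x y => (hB y x)
  have hB2 : twistedTraceSum K L c = (2 : K)⁻¹ • ∑ σ, phi K L (c σ) σ := by
    rw [← twistedTraceSum_add_flip, hflip, ← two_smul K, smul_smul, inv_mul_cancel₀ h2, one_smul]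
  rw [hB2]
  exact Submodule.smul_mem _ _ <| Submodule.sum_mem _ fun σ _ =>
    Submodule.mem_iSup_of_mem σ <| Submodule.subset_span ⟨c σ, rfl⟩

lemma iSup_Asub_eq_symSubmodule [IsGalois K L] (h2 : (2 : K) ≠ 0) {ι : Type*}
    (F : ι → L ≃ₐ[K] L) (hF : ∀ σ, ∃ p, σ = F p ∨ σ = (F p)⁻¹) :
    ⨆ p, Asub K L (F p) = symSubmodule K L := by
  refine le_antisymm (iSup_le fun p => Asub_le_symSubmodule (F p)) ?_
  refine (symSubmodule_le_iSup_Asub h2).trans (iSup_le fun σ => ?_)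
  obtain ⟨p, rfl | rfl⟩ := hF σ
  · exact le_iSup_of_le p le_rfl
  · exact le_iSup_of_le p (Asub_inv (F p)).le

lemma iSupIndep_Asub [Algebra.IsSeparable K L] {ι : Type*} (F : ι → L ≃ₐ[K] L)
    (hF : ∀ p q, F p = F q ∨ F p = (F q)⁻¹ → p = q) : iSupIndep fun p => Asub K L (F p) := by
  classical
  simp_rw [Asub_eq_map]
  refine (twistedTraceSum K L).iSupIndep_map twistedTraceSum_injective
    (iSupIndep_of_apply_eq_zero_of_notMem (fun p => {F p, (F p)⁻¹}) ?_ ?_)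
  · intro p q hpq
    refine Set.disjoint_left.2 ?_
    rintro ρ (rfl | rfl) (h | h)
    · exact hpq (hF p q (Or.inl h))
    · exact hpq (hF p q (Or.inr h))
    · exact hpq (hF p q (Or.inr (inv_eq_iff_eq_inv.1 h)))
    · exact hpq (hF p q (Or.inl (inv_inj.1 h)))
  · rintro p _ ⟨b, rfl⟩ ρ hρ
    simp only [Set.mem_insert_iff, Set.mem_singleton_iff, not_or] at hρ
    exact phiCoords_apply_of_ne b hρ.1 hρ.2

end GaloisForms

lemma eq_of_sumElim_eq_or_eq_inv {G : Type*} [Group G] {k m : ℕ} {τs : Fin k → G}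
    {σs : Fin (m + 1) → G} (hσ0 : σs 0 = 1) (hτord : ∀ i, orderOf (τs i) = 2)
    (hτinj : Function.Injective τs) (hσinj : ∀ i j, σs i = σs j ∨ σs i = (σs j)⁻¹ → i = j)
    (hσnoninv : ∀ j, j ≠ 0 → σs j ≠ (σs j)⁻¹) {p q : Fin k ⊕ Fin (m + 1)}
    (h : Sum.elim τs σs p = Sum.elim τs σs q ∨ Sum.elim τs σs p = (Sum.elim τs σs q)⁻¹) :
    p = q := by
  have hτinv i : (τs i)⁻¹ = τs i := inv_eq_self_of_orderOf_eq_two (hτord i)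
  have hτσ i j : ¬(τs i = σs j ∨ τs i = (σs j)⁻¹) := by
    intro h
    have hσ : σs j = (σs j)⁻¹ := by
      rcases h with h | h
      · rw [← h, hτinv]
      · rw [← h, ← hτinv, h, inv_inv]
    obtain rfl : j = 0 := by_contra fun hj => hσnoninv j hj hσ
    rw [hσ0, inv_one, or_self] at h
    simpa [h] using hτord i
  rcases p with i | j <;> rcases q with i' | j' <;>
    simp only [Sum.elim_inl, Sum.elim_inr] at h
  · rw [hτinv, or_self] at h
    exact congrArg _ (hτinj h)
  · exact absurd h (hτσ i j')
  · rw [hτinv, or_self] at h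
    exact absurd (Or.inl h.symm) (hτσ i' j)
  · exact congrArg _ (hσinj j j' h)

theorem sym_direct_sum_even_general (K L : Type*) [Field K] [Field L] [Algebra K L]
    [FiniteDimensional K L] [IsGalois K L] (h2 : (2 : K) ≠ 0)
    (n k m : ℕ) (hn : finrank K L = n)
    (τs : Fin k → (L ≃ₐ[K] L)) (σs : Fin (m + 1) → (L ≃ₐ[K] L)) (hσ0 : σs 0 = 1)
    (hτord : ∀ i, orderOf (τs i) = 2)
    (hτinj : Function.Injective τs)
    (hcover : ∀ τ : L ≃ₐ[K] L, (∃ i, τ = τs i) ∨ ∃ j, τ = σs j ∨ τ = (σs j)⁻¹)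
    (hσinj : ∀ i j : Fin (m + 1), (σs i = σs j ∨ σs i = (σs j)⁻¹) → i = j)
    (hσnoninv : ∀ j, j ≠ 0 → σs j ≠ (σs j)⁻¹) :
    iSupIndep (Sum.elim (fun i => Asub K L (τs i)) (fun j => Asub K L (σs j)) :
        Fin k ⊕ Fin (m + 1) → Submodule K (L →ₗ[K] L →ₗ[K] K)) ∧
    (⨆ p : Fin k ⊕ Fin (m + 1),
        Sum.elim (fun i => Asub K L (τs i)) (fun j => Asub K L (σs j)) p) =
      symSubmodule K L ∧
    (∀ i, finrank K (Asub K L (τs i)) = n / 2) ∧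
    (∀ i, ∀ B ∈ Asub K L (τs i), B ≠ 0 → ∀ x : L, (∀ y : L, B x y = 0) → x = 0) ∧
    (∀ j, finrank K (Asub K L (σs j)) = n) := by
  have hfam : Sum.elim (fun i => Asub K L (τs i)) (fun j => Asub K L (σs j)) =
      fun p => Asub K L (Sum.elim τs σs p) := (Sum.comp_elim (Asub K L) τs σs).symm
  have hcoverPairs (σ : L ≃ₐ[K] L) : ∃ p, σ = Sum.elim τs σs p ∨ σ = (Sum.elim τs σs p)⁻¹ := by
    rcases hcover σ with ⟨i, h⟩ | ⟨j, h⟩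
    exacts [⟨.inl i, .inl h⟩, ⟨.inr j, h⟩]
  refine ⟨hfam ▸ iSupIndep_Asub _ fun p q =>
      eq_of_sumElim_eq_or_eq_inv hσ0 hτord hτinj hσinj hσnoninv,
    hfam ▸ iSup_Asub_eq_symSubmodule h2 _ hcoverPairs, fun i => ?_,
    fun i B hB hB0 x hx => eq_zero_of_mem_Asub_of_inv_eq_self
      (inv_eq_self_of_orderOf_eq_two (hτord i)) hB hB0 hx, fun j => ?_⟩
  · have := two_mul_finrank_Asub_of_orderOf_eq_two h2 (hτord i)
    omega
  · rcases eq_or_ne j 0 with rfl | hj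
    · rw [hσ0, finrank_Asub_one h2, hn]
    · rw [finrank_Asub_of_ne_inv (hσnoninv j hj), hn]

/-- Suppose `n = [L:K]` is even and
`G = {τ_1, …, τ_k, 1, σ_1, σ_1⁻¹, …, σ_m, σ_m⁻¹}` is a listing of `G` without repetitions,
where `τ_1, …, τ_k` are exactly the involutions of `G` and `σ_0 = 1`.  Then `Sym_K(L)` is
the internal direct sum `A^{τ_1} ⊕ ⋯ ⊕ A^{τ_k} ⊕ A^{σ_0} ⊕ A^{σ_1} ⊕ ⋯ ⊕ A^{σ_m}`, where
each `A^{τ_i}` has `K`-dimension `n/2` and every nonzero form in `A^{τ_i}` is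
nondegenerate, and each `A^{σ_j}` has `K`-dimension `n`. -/
theorem sym_direct_sum_even (K L : Type*) [Field K] [Field L] [Algebra K L]
    [FiniteDimensional K L] [IsGalois K L] (h2 : (2 : K) ≠ 0)
    (n k m : ℕ) (hn : finrank K L = n) (hneven : Even n)
    (τs : Fin k → (L ≃ₐ[K] L)) (σs : Fin (m + 1) → (L ≃ₐ[K] L)) (hσ0 : σs 0 = 1)
    (hτord : ∀ i, orderOf (τs i) = 2)
    (hτall : ∀ τ : L ≃ₐ[K] L, orderOf τ = 2 → ∃ i, τ = τs i)
    (hτinj : Function.Injective τs)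
    (hcover : ∀ τ : L ≃ₐ[K] L, (∃ i, τ = τs i) ∨ ∃ j, τ = σs j ∨ τ = (σs j)⁻¹)
    (hσinj : ∀ i j : Fin (m + 1), (σs i = σs j ∨ σs i = (σs j)⁻¹) → i = j)
    (hσnoninv : ∀ j, j ≠ 0 → σs j ≠ (σs j)⁻¹) :
    iSupIndep (Sum.elim (fun i => Asub K L (τs i)) (fun j => Asub K L (σs j)) :
        Fin k ⊕ Fin (m + 1) → Submodule K (L →ₗ[K] L →ₗ[K] K)) ∧
    (⨆ p : Fin k ⊕ Fin (m + 1),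
        Sum.elim (fun i => Asub K L (τs i)) (fun j => Asub K L (σs j)) p) =
      symSubmodule K L ∧
    (∀ i, finrank K (Asub K L (τs i)) = n / 2) ∧
    (∀ i, ∀ B ∈ Asub K L (τs i), B ≠ 0 → ∀ x : L, (∀ y : L, B x y = 0) → x = 0) ∧
    (∀ j, finrank K (Asub K L (σs j)) = n) :=
  sym_direct_sum_even_general K L h2 n k m hn τs σs hσ0 hτord hτinj hcover hσinj hσnoninv
end
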